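/- Let G be a countable group with a weakly mixing measure-preserving action on a probability space (X,μ). Then for every measure-preserving action of G on a probability space (Y,ν), every F ∈ L²(X × Y, μ ⊗ ν; ℂ) that is invariant under the diagonal action (F(g • x, g • y) = F(x,y) for (μ⊗ν)-a.e. (x,y), for every g ∈ G) depends only on the second variable: there exists h ∈ L²(Y,ν;ℂ) with h(g • y) = h(y) for ν-a.e. y for every g ∈ G, such that F(x,y) = h(y) for (μ⊗ν)-a.e. (x,y). -/

import Mathlib

/-!
Subtract from `F` its fibre mean `h y = ∫ F(x, y) dμ(x)`; the remainder `g` is invariant and has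
vanishing fibre means. The correlation `K(x, x') = ∫ g(x, y) conj g(x', y) dν(y)` is invariant
under the diagonal action on `X × X`, hence a.e. constant by weak mixing, and by Fubini
`∫_{A × A} K = ∫_Y |∫_A g(x, y) dμ(x)|² dν(y)` for every measurable `A ⊆ X`. Taking `A = X` shows
that the constant is `0`; then every integral of `g` over a rectangle `A × B` vanishes, so `g = 0`.
-/

open MeasureTheory Filter ComplexConjugate
open scoped ENNReal

namespace MeasureTheory

def IsErgodicFamily {ι Z : Type*} [MeasurableSpace Z] (T : ι → Z → Z) (ρ : Measure Z) : Prop :=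
  ∀ S : Set Z, MeasurableSet S → (∀ i, ρ (symmDiff S (T i ⁻¹' S)) = 0) → ρ S = 0 ∨ ρ Sᶜ = 0

theorem IsErgodicFamily.ae_eq_const_of_ae_eq_comp {ι Z β : Type*} [MeasurableSpace Z]
    [MeasurableSpace β] [Nonempty β] [MeasurableSpace.CountablySeparated β]
    {T : ι → Z → Z} {ρ : Measure Z} (hT : IsErgodicFamily T ρ) {f : Z → β} (hf : Measurable f)
    (hinv : ∀ i, f ∘ T i =ᵐ[ρ] f) : ∃ c, f =ᵐ[ρ] Function.const Z c := by
  refine exists_eventuallyEq_const_of_forall_separating MeasurableSet fun U hU => ?_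
  have hnull (i) : ρ (symmDiff (f ⁻¹' U) (T i ⁻¹' (f ⁻¹' U))) = 0 :=
    measure_symmDiff_eq_zero_iff.mpr ((hinv i).preimage U).symm
  rcases hT _ (hf hU) hnull with h | h
  · exact Or.inr (measure_eq_zero_iff_ae_notMem.mp h)
  · exact Or.inl (ae_iff.mpr h)

theorem Integrable.ae_eq_zero_of_forall_setIntegral_prod_eq_zero {X Y E : Type*}
    [MeasurableSpace X] [MeasurableSpace Y] [NormedAddCommGroup E] [NormedSpace ℝ E]
    [CompleteSpace E] {ρ : Measure (X × Y)} {f : X × Y → E} (hf : Integrable f ρ)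
    (h : ∀ A, MeasurableSet A → ∀ B, MeasurableSet B → ∫ z in A ×ˢ B, f z ∂ρ = 0) :
    f =ᵐ[ρ] 0 := by
  suffices ∀ S, MeasurableSet S → ∫ z in S, f z ∂ρ = 0 from
    hf.ae_eq_zero_of_forall_setIntegral_eq_zero fun S hS _ => this S hS
  intro S hS
  induction S, hS using MeasurableSpace.induction_on_inter generateFrom_prod.symm
    isPiSystem_prod with
  | empty => simp
  | basic S hS =>
    obtain ⟨A, hA, B, hB, rfl⟩ := hS
    exact h A hA B hB
  | compl S hS ih =>
    have huniv := h _ MeasurableSet.univ _ MeasurableSet.univ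
    rwa [Set.univ_prod_univ, setIntegral_univ, ← integral_add_compl hS hf, ih, zero_add]
      at huniv
  | iUnion S hdisj hS ih =>
    simp [integral_iUnion hS hdisj hf.integrableOn, ih]

section FiberMean

variable {X Y E : Type*} [MeasurableSpace X] [MeasurableSpace Y] [NormedAddCommGroup E]
  [NormedSpace ℝ E] {μ : Measure X} {ν : Measure Y}

theorem MemLp.integral_prod_left [IsFiniteMeasure μ] [SFinite ν] {p : ℝ≥0∞} (hp1 : 1 ≤ p)
    (hp : p ≠ ∞) {f : X × Y → E} (hfm : StronglyMeasurable f) (hf : MemLp f p (μ.prod ν)) :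
    MemLp (fun y => ∫ x, f (x, y) ∂μ) p ν := by
  have hp0 : p ≠ 0 := (zero_lt_one.trans_le hp1).ne'
  refine ⟨(hfm.integral_prod_left (f := fun x y => f (x, y))).aestronglyMeasurable, ?_⟩
  rw [eLpNorm_lt_top_iff_lintegral_rpow_enorm_lt_top hp0 hp]
  set C := (μ Set.univ ^ (1 / (1 : ℝ≥0∞).toReal - 1 / p.toReal)) ^ p.toReal
  have hC : C ≠ ∞ := by
    have hp1' : 1 ≤ p.toReal := by simpa using ENNReal.toReal_mono hp hp1
    refine ENNReal.rpow_ne_top_of_nonneg ENNReal.toReal_nonneg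
      (ENNReal.rpow_ne_top_of_nonneg ?_ (measure_ne_top _ _))
    simpa using inv_le_one_of_one_le₀ hp1'
  have hslice (y : Y) :
      ‖∫ x, f (x, y) ∂μ‖ₑ ^ p.toReal ≤ (∫⁻ x, ‖f (x, y)‖ₑ ^ p.toReal ∂μ) * C := by
    calc ‖∫ x, f (x, y) ∂μ‖ₑ ^ p.toReal
        ≤ eLpNorm (fun x => f (x, y)) 1 μ ^ p.toReal := by
          rw [eLpNorm_one_eq_lintegral_enorm]
          gcongr
          exact enorm_integral_le_lintegral_enorm _
      _ ≤ (eLpNorm (fun x => f (x, y)) p μ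
            * μ Set.univ ^ (1 / (1 : ℝ≥0∞).toReal - 1 / p.toReal)) ^ p.toReal := by
          gcongr
          exact eLpNorm_le_eLpNorm_mul_rpow_measure_univ hp1
            (hfm.comp_measurable measurable_prodMk_right).aestronglyMeasurable
      _ = (∫⁻ x, ‖f (x, y)‖ₑ ^ p.toReal ∂μ) * C := by
          rw [ENNReal.mul_rpow_of_nonneg _ _ ENNReal.toReal_nonneg, eLpNorm_eq_eLpNorm' hp0 hp,
            lintegral_rpow_enorm_eq_rpow_eLpNorm' (ENNReal.toReal_pos hp0 hp)]
  calc ∫⁻ y, ‖∫ x, f (x, y) ∂μ‖ₑ ^ p.toReal ∂ν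
      ≤ ∫⁻ y, (∫⁻ x, ‖f (x, y)‖ₑ ^ p.toReal ∂μ) * C ∂ν := lintegral_mono hslice
    _ = (∫⁻ z, ‖f z‖ₑ ^ p.toReal ∂(μ.prod ν)) * C := by
        rw [lintegral_mul_const' _ _ hC,
          lintegral_prod_symm _ (hfm.enorm.pow_const _).aemeasurable]
    _ < ∞ := ENNReal.mul_lt_top
        (lintegral_rpow_enorm_lt_top_of_eLpNorm_lt_top hp0 hp hf.2) hC.lt_top

theorem integral_prod_left_comp_ae_eq [SFinite μ] [SFinite ν] {S : X → X} {T : Y → Y}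
    (hS : MeasurePreserving S μ μ) {f : X × Y → E} (hfm : StronglyMeasurable f)
    (hinv : ∀ᵐ p ∂(μ.prod ν), f (S p.1, T p.2) = f p) :
    ∀ᵐ y ∂ν, ∫ x, f (x, T y) ∂μ = ∫ x, f (x, y) ∂μ := by
  have hslices : ∀ᵐ y ∂ν, ∀ᵐ x ∂μ, f (S x, T y) = f (x, y) :=
    Measure.ae_ae_of_ae_prod (Measure.measurePreserving_swap.quasiMeasurePreserving.ae hinv)
  filter_upwards [hslices] with y hy
  calc ∫ x, f (x, T y) ∂μ = ∫ x, f (S x, T y) ∂μ := by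
        conv_lhs => rw [← hS.map_eq]
        exact integral_map hS.aemeasurable
          (hfm.comp_measurable measurable_prodMk_right).aestronglyMeasurable
    _ = ∫ x, f (x, y) ∂μ := integral_congr_ae hy

end FiberMean

section SliceCorrelation

variable {X X' Y : Type*} [MeasurableSpace X] [MeasurableSpace X'] [MeasurableSpace Y]
  {μ : Measure X} {μ' : Measure X'} {ν : Measure Y}

theorem MemLp.comp_prodMap_fst_id [SFinite μ] [IsFiniteMeasure μ'] [SFinite ν] {E : Type*}
    [NormedAddCommGroup E] {p : ℝ≥0∞} {g : X × Y → E} (hg : MemLp g p (μ.prod ν)) :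
    MemLp (g ∘ Prod.map Prod.fst id) p ((μ.prod μ').prod ν) := by
  refine MemLp.comp_of_map ?_ (measurable_fst.prodMap measurable_id).aemeasurable
  rw [← Measure.map_prod_map _ _ measurable_fst measurable_id, Measure.map_fst_prod,
    Measure.map_id, Measure.prod_smul_left]
  exact hg.smul_measure (measure_ne_top _ _)

theorem MemLp.comp_prodMap_snd_id [IsFiniteMeasure μ] [SFinite μ'] [SFinite ν] {E : Type*}
    [NormedAddCommGroup E] {p : ℝ≥0∞} {g : X' × Y → E} (hg : MemLp g p (μ'.prod ν)) :
    MemLp (g ∘ Prod.map Prod.snd id) p ((μ.prod μ').prod ν) := by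
  refine MemLp.comp_of_map ?_ (measurable_snd.prodMap measurable_id).aemeasurable
  rw [← Measure.map_prod_map _ _ measurable_snd measurable_id, Measure.map_snd_prod,
    Measure.map_id, Measure.prod_smul_left]
  exact hg.smul_measure (measure_ne_top _ _)

/-- The Gram kernel `(x, x') ↦ ⟪g(x', ·), g(x, ·)⟫` of the slices of `g` in `L²(ν)`. -/
noncomputable def sliceCorrelation (ν : Measure Y) (g : X × Y → ℂ) (q : X × X) : ℂ :=
  ∫ y, g (q.1, y) * conj (g (q.2, y)) ∂ν

theorem integrable_mul_conj_slices [IsFiniteMeasure μ] [SFinite ν] {g : X × Y → ℂ}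
    (hg : MemLp g 2 (μ.prod ν)) :
    Integrable (fun r : (X × X) × Y => g (r.1.1, r.2) * conj (g (r.1.2, r.2)))
      ((μ.prod μ).prod ν) :=
  (hg.comp_prodMap_fst_id (μ' := μ)).integrable_mul (hg.comp_prodMap_snd_id (μ := μ)).star

theorem integral_sliceCorrelation [IsFiniteMeasure μ] [SFinite ν] {g : X × Y → ℂ}
    (hg : MemLp g 2 (μ.prod ν)) :
    ∫ q, sliceCorrelation ν g q ∂(μ.prod μ) = ↑(∫ y, ‖∫ x, g (x, y) ∂μ‖ ^ 2 ∂ν) := by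
  calc ∫ q, sliceCorrelation ν g q ∂(μ.prod μ)
      = ∫ y, ∫ q, g (q.1, y) * conj (g (q.2, y)) ∂(μ.prod μ) ∂ν :=
        integral_integral_swap (integrable_mul_conj_slices hg)
    _ = ∫ y, ((‖∫ x, g (x, y) ∂μ‖ ^ 2 : ℝ) : ℂ) ∂ν := by
        congr 1 with y
        rw [integral_prod_mul (fun x => g (x, y)) (fun x => conj (g (x, y))), integral_conj,
          Complex.mul_conj']
        norm_cast
    _ = ↑(∫ y, ‖∫ x, g (x, y) ∂μ‖ ^ 2 ∂ν) := integral_ofReal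

theorem sliceCorrelation_comp_ae_eq [SFinite μ] [SFinite ν] {S : X → X} {T : Y → Y}
    (hT : MeasurePreserving T ν ν) {g : X × Y → ℂ} (hgm : StronglyMeasurable g)
    (hinv : ∀ᵐ p ∂(μ.prod ν), g (S p.1, T p.2) = g p) :
    (fun q => sliceCorrelation ν g (S q.1, S q.2)) =ᵐ[μ.prod μ] sliceCorrelation ν g := by
  have hslices : ∀ᵐ x ∂μ, ∀ᵐ y ∂ν, g (S x, T y) = g (x, y) := Measure.ae_ae_of_ae_prod hinv
  filter_upwards [Measure.quasiMeasurePreserving_fst.ae hslices,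
    Measure.quasiMeasurePreserving_snd.ae hslices] with q h₁ h₂
  have hm : AEStronglyMeasurable (fun y => g (S q.1, y) * conj (g (S q.2, y))) ν :=
    ((hgm.comp_measurable measurable_prodMk_left).mul
      (hgm.comp_measurable measurable_prodMk_left).star).aestronglyMeasurable
  calc sliceCorrelation ν g (S q.1, S q.2)
      = ∫ y, g (S q.1, T y) * conj (g (S q.2, T y)) ∂ν := by
        conv_lhs => rw [sliceCorrelation, ← hT.map_eq]
        exact integral_map hT.aemeasurable (hT.map_eq.symm ▸ hm)
    _ = sliceCorrelation ν g q := integral_congr_ae <| by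
        filter_upwards [h₁, h₂] with y e₁ e₂
        rw [e₁, e₂]

theorem ae_eq_zero_of_sliceCorrelation_ae_eq_zero [IsFiniteMeasure μ] [IsFiniteMeasure ν]
    {g : X × Y → ℂ} (hgm : StronglyMeasurable g) (hg : MemLp g 2 (μ.prod ν))
    (hK : sliceCorrelation ν g =ᵐ[μ.prod μ] 0) : g =ᵐ[μ.prod ν] 0 := by
  have hslab (A : Set X) (hA : MeasurableSet A) : ∀ᵐ y ∂ν, ∫ x in A, g (x, y) ∂μ = 0 := by
    have hgA : MemLp g 2 ((μ.restrict A).prod ν) := by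
      rw [← Measure.restrict_univ (μ := ν), Measure.prod_restrict]
      exact hg.restrict _
    have hsq : Integrable (fun y => ‖∫ x in A, g (x, y) ∂μ‖ ^ 2) ν :=
      (hgA.integral_prod_left one_le_two ENNReal.ofNat_ne_top hgm).integrable_norm_pow
        two_ne_zero
    have hzero : ∫ y, ‖∫ x in A, g (x, y) ∂μ‖ ^ 2 ∂ν = 0 := by
      have h := integral_sliceCorrelation hgA
      rw [Measure.prod_restrict, integral_eq_zero_of_ae (ae_restrict_of_ae hK)] at h
      exact_mod_cast h.symm
    filter_upwards [(integral_eq_zero_iff_of_nonneg (fun _ => by positivity) hsq).mp hzero]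
      with y hy
    simpa using hy
  refine (hg.integrable one_le_two).ae_eq_zero_of_forall_setIntegral_prod_eq_zero
    fun A hA B hB => ?_
  rw [← Measure.prod_restrict, integral_prod_symm _ ?_]
  · exact integral_eq_zero_of_ae (ae_restrict_of_ae (hslab A hA))
  · rw [Measure.prod_restrict]
    exact (hg.integrable one_le_two).restrict

theorem ae_eq_zero_of_ae_invariant_of_integral_slice_eq_zero [IsProbabilityMeasure μ]
    [IsFiniteMeasure ν] {ι : Type*} {S : ι → X → X} {T : ι → Y → Y}
    (hT : ∀ i, MeasurePreserving (T i) ν ν)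
    (herg : IsErgodicFamily (fun i q => (S i q.1, S i q.2)) (μ.prod μ))
    {g : X × Y → ℂ} (hgm : StronglyMeasurable g) (hg : MemLp g 2 (μ.prod ν))
    (hinv : ∀ i, ∀ᵐ p ∂(μ.prod ν), g (S i p.1, T i p.2) = g p)
    (hmean : ∀ᵐ y ∂ν, ∫ x, g (x, y) ∂μ = 0) : g =ᵐ[μ.prod ν] 0 := by
  have hKm : StronglyMeasurable (sliceCorrelation ν g) :=
    ((hgm.comp_measurable (measurable_fst.fst.prodMk measurable_snd)).mul
      (hgm.comp_measurable (measurable_fst.snd.prodMk measurable_snd)).star).integral_prod_right'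
  obtain ⟨c, hc⟩ := herg.ae_eq_const_of_ae_eq_comp hKm.measurable fun i =>
    sliceCorrelation_comp_ae_eq (hT i) hgm (hinv i)
  obtain rfl : c = 0 := by
    have h := integral_sliceCorrelation hg
    rw [integral_congr_ae hc, integral_eq_zero_of_ae (hmean.mono fun y hy => by simp [hy])] at h
    simpa using h
  exact ae_eq_zero_of_sliceCorrelation_ae_eq_zero hgm hg hc

end SliceCorrelation

end MeasureTheory

open MeasureTheory

theorem weakly_mixing_product_invariant_functions_general
    {G : Type}
    {X Y : Type} [MeasurableSpace X] [MeasurableSpace Y]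
    (μ : Measure X) [IsProbabilityMeasure μ] (ν : Measure Y) [IsProbabilityMeasure ν]
    (aX : G → X → X) (aY : G → Y → Y)
    (hXmp : ∀ g, MeasurePreserving (aX g) μ μ)
    (hYmp : ∀ g, MeasurePreserving (aY g) ν ν)
    (hwmix : ∀ S : Set (X × X), MeasurableSet S →
      (∀ g : G, (μ.prod μ) (symmDiff S ((fun p => (aX g p.1, aX g p.2)) ⁻¹' S)) = 0) →
      (μ.prod μ) S = 0 ∨ (μ.prod μ) Sᶜ = 0)
    (F : Lp ℂ 2 (μ.prod ν))
    (hinv : ∀ g : G, ∀ᵐ p ∂(μ.prod ν), F (aX g p.1, aY g p.2) = F p) :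
    ∃ h : Y → ℂ, Measurable h ∧ MemLp h 2 ν ∧
      (∀ g : G, ∀ᵐ y ∂ν, h (aY g y) = h y) ∧
      (∀ᵐ p ∂(μ.prod ν), F p = h p.2) := by
  obtain ⟨f, hfm, hFf⟩ : ∃ f, StronglyMeasurable f ∧ F =ᵐ[μ.prod ν] f :=
    ⟨_, (Lp.aestronglyMeasurable F).stronglyMeasurable_mk, (Lp.aestronglyMeasurable F).ae_eq_mk⟩
  have hf2 : MemLp f 2 (μ.prod ν) := (Lp.memLp F).ae_eq hFf
  have hfinv (γ : G) : ∀ᵐ p ∂(μ.prod ν), f (aX γ p.1, aY γ p.2) = f p := by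
    filter_upwards [hinv γ, hFf,
      ((hXmp γ).prod (hYmp γ)).quasiMeasurePreserving.ae_eq_comp hFf] with p h₁ h₂ h₃
    exact h₃.symm.trans (h₁.trans h₂)
  set h : Y → ℂ := fun y => ∫ x, f (x, y) ∂μ
  have hhm : StronglyMeasurable h := hfm.integral_prod_left (f := fun x y => f (x, y))
  have hh2 : MemLp h 2 ν := hf2.integral_prod_left one_le_two ENNReal.ofNat_ne_top hfm
  have hhinv (γ : G) : ∀ᵐ y ∂ν, h (aY γ y) = h y :=
    integral_prod_left_comp_ae_eq (hXmp γ) hfm (hfinv γ)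
  have hg0 : (fun p => f p - h p.2) =ᵐ[μ.prod ν] 0 := by
    refine ae_eq_zero_of_ae_invariant_of_integral_slice_eq_zero hYmp hwmix
      (hfm.sub (hhm.comp_measurable measurable_snd))
      (hf2.sub (hh2.comp_measurePreserving measurePreserving_snd)) (fun γ => ?_) ?_
    · filter_upwards [hfinv γ, Measure.quasiMeasurePreserving_snd.ae (hhinv γ)] with p h₁ h₂
      simp only [h₁, h₂]
    · filter_upwards [(hf2.integrable one_le_two).prod_left_ae] with y hy
      simp [integral_sub hy (integrable_const (h y)), h]
  refine ⟨h, hhm.measurable, hh2, hhinv, ?_⟩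
  filter_upwards [hFf, hg0] with p h₁ h₂
  exact h₁.trans (sub_eq_zero.mp h₂)

/-- **Weakly mixing actions absorb invariants of product actions.**
If a countable group `G` acts weakly mixingly and measure-preservingly on `(X,μ)`, then for
any measure-preserving `G`-action on `(Y,ν)`, every diagonally invariant `F ∈ L²(X × Y)`
depends only on the second variable, via an invariant `h ∈ L²(Y,ν)`. -/
theorem weakly_mixing_product_invariant_functions
    {G : Type} [Group G] [Countable G]
    {X Y : Type} [MeasurableSpace X] [MeasurableSpace Y]
    (μ : Measure X) [IsProbabilityMeasure μ] (ν : Measure Y) [IsProbabilityMeasure ν]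
    (aX : G → X → X) (aY : G → Y → Y)
    (hXmeas : ∀ g, Measurable (aX g)) (hXmp : ∀ g, MeasurePreserving (aX g) μ μ)
    (hXone : ∀ x, aX 1 x = x) (hXmul : ∀ g h x, aX (g * h) x = aX g (aX h x))
    (hYmeas : ∀ g, Measurable (aY g)) (hYmp : ∀ g, MeasurePreserving (aY g) ν ν)
    (hYone : ∀ y, aY 1 y = y) (hYmul : ∀ g h y, aY (g * h) y = aY g (aY h y))
    (hwmix : ∀ S : Set (X × X), MeasurableSet S →
      (∀ g : G, (μ.prod μ) (symmDiff S ((fun p => (aX g p.1, aX g p.2)) ⁻¹' S)) = 0) →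
      (μ.prod μ) S = 0 ∨ (μ.prod μ) Sᶜ = 0)
    (F : Lp ℂ 2 (μ.prod ν))
    (hinv : ∀ g : G, ∀ᵐ p ∂(μ.prod ν), F (aX g p.1, aY g p.2) = F p) :
    ∃ h : Y → ℂ, Measurable h ∧ MemLp h 2 ν ∧
      (∀ g : G, ∀ᵐ y ∂ν, h (aY g y) = h y) ∧
      (∀ᵐ p ∂(μ.prod ν), F p = h p.2) :=
  weakly_mixing_product_invariant_functions_general μ ν aX aY hXmp hYmp hwmix F hinv
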